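/- arXiv:1801.06888 — 6 statements merged into one kernel-verified Lean document; each statement's English description precedes it below -/
import Mathlib

section
/- Let m, n, k ≥ 1 and 1 ≤ q ≤ k, and let M denote the finite type of multi-indices of length k in Fin m → ℕ. Fix h ≥ 1, pairwise distinct multi-indices 𝒥₁, …, 𝒥_h each of length q, multi-indices I₁, …, I_h each of length k − q, and indices α₁, …, α_h ∈ Fin n. Let L ∈ MvPolynomial (Fin n × M) ℝ be the determinant of the h × h matrix whose (r, c) entry is the variable X_{(α_r, I_r + 𝒥_c)}. Then for every α, β ∈ Fin n and every multi-index H with |H| = 2k, the sum over all pairs (J, K) ∈ M × M with J + K = H of pderiv (α,J) (pderiv (β,K) L) equals 0. -/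
/-- The type of multi-indices `J : Fin m → ℕ` of length `k`. -/
abbrev MultiIndexLen (m k : ℕ) : Type := {J : Fin m → ℕ // ∑ i, J i = k}

instance MultiIndexLen.finite (m k : ℕ) : Finite (MultiIndexLen m k) :=
  Finite.of_injective
    (fun J => (fun i => (⟨J.1 i,
        Nat.lt_succ_of_le (le_trans
          (Finset.single_le_sum (fun j _ => Nat.zero_le (J.1 j)) (Finset.mem_univ i))
          (le_of_eq J.2))⟩ : Fin (k + 1))))
    (fun _ _ h => Subtype.ext (funext fun i => congrArg Fin.val (congrFun h i)))

noncomputable instance MultiIndexLen.fintype (m k : ℕ) : Fintype (MultiIndexLen m k) :=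
  Fintype.ofFinite _

open MvPolynomial Finset

lemma pderiv_prod_X {τ : Type*} [DecidableEq τ] {ι : Type*} [DecidableEq ι]
    (s : Finset ι) (g : ι → τ) (v : τ) :
    pderiv v (∏ i ∈ s, (X (g i) : MvPolynomial τ ℝ)) =
      ∑ i ∈ s, if g i = v then ∏ j ∈ s.erase i, (X (g j) : MvPolynomial τ ℝ) else 0 := by
  induction s using Finset.induction_on with
  | empty => simp [pderiv_one]
  | @insert a s ha ih =>
    rw [Finset.prod_insert ha, pderiv_mul, ih, Finset.sum_insert ha, Finset.erase_insert ha,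
      Finset.mul_sum]
    congr 1
    · rw [pderiv_X, Pi.single_apply]
      split_ifs <;> simp
    · refine Finset.sum_congr rfl fun i hi => ?_
      have hia : i ≠ a := fun hc => ha (hc ▸ hi)
      rw [Finset.erase_insert_of_ne hia.symm,
        Finset.prod_insert (fun hc => ha (Finset.mem_of_mem_erase hc)), mul_ite, mul_zero]

lemma pderiv_pderiv_prod_X {τ : Type*} [DecidableEq τ] {ι : Type*} [DecidableEq ι]
    (s : Finset ι) (g : ι → τ) (u v : τ) :
    pderiv u (pderiv v (∏ i ∈ s, (X (g i) : MvPolynomial τ ℝ))) =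
      ∑ i ∈ s, ∑ j ∈ s.erase i,
        if g i = v ∧ g j = u then ∏ t ∈ (s.erase i).erase j, (X (g t) : MvPolynomial τ ℝ)
        else 0 := by
  rw [pderiv_prod_X, map_sum]
  refine Finset.sum_congr rfl fun i _ => ?_
  split_ifs with hiv
  · rw [pderiv_prod_X]
    exact Finset.sum_congr rfl fun j _ => by simp [hiv]
  · simp [hiv]

lemma sum_erase_eq_sum_ite {ι M : Type*} [Fintype ι] [DecidableEq ι] [AddCommMonoid M]
    (c : ι) (f : ι → M) :
    ∑ x ∈ Finset.univ.erase c, f x = ∑ x : ι, if x ≠ c then f x else 0 := by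
  rw [← Finset.filter_ne', Finset.sum_filter]

lemma det_pair_cancel {τ : Type*} [DecidableEq τ] {h : ℕ}
    (e : Fin h → Fin h → τ) (D : τ → τ → Prop) [∀ u v, Decidable (D u v)]
    (hsym : ∀ r r' c c', D (e r c) (e r' c') ↔ D (e r c') (e r' c)) :
    ∑ σ : Equiv.Perm (Fin h), (Equiv.Perm.sign σ : ℤ) •
      ∑ c : Fin h, ∑ c' ∈ Finset.univ.erase c,
        (if D (e (σ c) c) (e (σ c') c') then
          ∏ t ∈ (Finset.univ.erase c).erase c', (X (e (σ t) t) : MvPolynomial τ ℝ)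
        else 0) = 0 := by
  classical
  have key : ∀ (σ : Equiv.Perm (Fin h)) (c c' : Fin h), c' ≠ c →
      ((Equiv.Perm.sign σ : ℤ) •
        (if D (e (σ c) c) (e (σ c') c') then
          ∏ t ∈ (Finset.univ.erase c).erase c', (X (e (σ t) t) : MvPolynomial τ ℝ) else 0)) +
      ((Equiv.Perm.sign (σ * Equiv.swap c c') : ℤ) •
        (if D (e ((σ * Equiv.swap c c') c') c') (e ((σ * Equiv.swap c c') c) c) then
          ∏ t ∈ (Finset.univ.erase c').erase c,
            (X (e ((σ * Equiv.swap c c') t) t) : MvPolynomial τ ℝ) else 0)) = 0 := by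
    intro σ c c' hcc
    have h1 : (σ * Equiv.swap c c') c' = σ c := by simp [Equiv.Perm.mul_apply]
    have h2 : (σ * Equiv.swap c c') c = σ c' := by simp [Equiv.Perm.mul_apply]
    have hD : D (e ((σ * Equiv.swap c c') c') c') (e ((σ * Equiv.swap c c') c) c)
        ↔ D (e (σ c) c) (e (σ c') c') := by
      rw [h1, h2]
      exact hsym (σ c) (σ c') c' c
    have hP : ∏ t ∈ (Finset.univ.erase c').erase c,
        (X (e ((σ * Equiv.swap c c') t) t) : MvPolynomial τ ℝ)
        = ∏ t ∈ (Finset.univ.erase c).erase c', (X (e (σ t) t) : MvPolynomial τ ℝ) := by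
      rw [Finset.erase_right_comm]
      refine Finset.prod_congr rfl fun t ht => ?_
      have htc' : t ≠ c' := Finset.ne_of_mem_erase ht
      have htc : t ≠ c := Finset.ne_of_mem_erase (Finset.mem_of_mem_erase ht)
      rw [Equiv.Perm.mul_apply, Equiv.swap_apply_of_ne_of_ne htc htc']
    have hsign : (Equiv.Perm.sign (σ * Equiv.swap c c') : ℤ) = -(Equiv.Perm.sign σ : ℤ) := by
      rw [Equiv.Perm.sign_mul, Equiv.Perm.sign_swap (Ne.symm hcc)]
      simp
    rw [hsign]
    by_cases hd : D (e (σ c) c) (e (σ c') c')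
    · rw [if_pos hd, if_pos (hD.mpr hd), hP, neg_smul, add_neg_cancel]
    · rw [if_neg hd, if_neg (fun hc => hd (hD.mp hc)), smul_zero, smul_zero, add_zero]
  have step : (∑ σ : Equiv.Perm (Fin h), (Equiv.Perm.sign σ : ℤ) •
      ∑ c : Fin h, ∑ c' ∈ Finset.univ.erase c,
        (if D (e (σ c) c) (e (σ c') c') then
          ∏ t ∈ (Finset.univ.erase c).erase c', (X (e (σ t) t) : MvPolynomial τ ℝ)
        else 0))
      = ∑ x : Equiv.Perm (Fin h) × Fin h × Fin h,
          (if x.2.2 ≠ x.2.1 then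
            (Equiv.Perm.sign x.1 : ℤ) •
              (if D (e (x.1 x.2.1) x.2.1) (e (x.1 x.2.2) x.2.2) then
                ∏ t ∈ (Finset.univ.erase x.2.1).erase x.2.2,
                  (X (e (x.1 t) t) : MvPolynomial τ ℝ) else 0)
          else 0) := by
    conv_rhs => rw [Fintype.sum_prod_type]
    refine Finset.sum_congr rfl fun σ _ => ?_
    conv_rhs => rw [Fintype.sum_prod_type]
    rw [Finset.smul_sum]
    refine Finset.sum_congr rfl fun c _ => ?_
    rw [Finset.smul_sum, sum_erase_eq_sum_ite c (fun c' =>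
      (Equiv.Perm.sign σ : ℤ) •
        (if D (e (σ c) c) (e (σ c') c') then
          ∏ t ∈ (Finset.univ.erase c).erase c', (X (e (σ t) t) : MvPolynomial τ ℝ) else 0))]
  rw [step]
  refine Finset.sum_ninvolution
    (fun x => (x.1 * Equiv.swap x.2.1 x.2.2, x.2.2, x.2.1)) ?_ ?_ (fun _ => Finset.mem_univ _) ?_
  · rintro ⟨σ, c, c'⟩
    by_cases hcc : c' = c
    · subst hcc
      simp
    · simp only [if_pos hcc, if_pos (Ne.symm hcc)]
      exact key σ c c' hcc
  · rintro ⟨σ, c, c'⟩ hne hgx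
    have hcc : c' ≠ c := by
      intro hcc
      exact hne (by simp [hcc])
    exact hcc (congrArg (fun y => y.2.1) hgx)
  · rintro ⟨σ, c, c'⟩
    have hs : σ * Equiv.swap c c' * Equiv.swap c' c = σ := by
      rw [mul_assoc, Equiv.swap_comm c' c, Equiv.swap_mul_self, mul_one]
    simp [hs]

/-- Theorem 5.1 in coordinates: the determinant Lagrangian of a hyperaffine hyperform,
`L = det (X_{(α_r, I_r + 𝒥_c)})` with the `𝒥_c` pairwise distinct of length `q`, the `I_r`
of length `k - q` and `1 ≤ q ≤ k`, satisfies equation (6): for all `α, β` and every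
multi-index `H` of length `2k`, the sum over pairs `(J, K)` of multi-indices of length `k`
with `J + K = H` of `∂²L/∂X_{(α,J)}∂X_{(β,K)}` vanishes, so that `L` has projectable
Euler--Lagrange equations. -/
theorem hyperaffine_det_projectable (m n k q : ℕ)
    (hm : 1 ≤ m) (hn : 1 ≤ n) (hk : 1 ≤ k) (hq : 1 ≤ q) (hqk : q ≤ k)
    (h : ℕ) (hh : 1 ≤ h)
    (𝒥 : Fin h → (Fin m → ℕ)) (h𝒥len : ∀ c, ∑ i, 𝒥 c i = q)
    (h𝒥inj : Function.Injective 𝒥)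
    (I : Fin h → (Fin m → ℕ)) (hIlen : ∀ r, ∑ i, I r i = k - q)
    (α : Fin h → Fin n)
    (L : MvPolynomial (Fin n × MultiIndexLen m k) ℝ)
    (hL : L = (Matrix.of fun r c : Fin h =>
        (MvPolynomial.X (α r, ⟨I r + 𝒥 c, by
            simp only [Pi.add_apply, Finset.sum_add_distrib, hIlen r, h𝒥len c]
            omega⟩) :
          MvPolynomial (Fin n × MultiIndexLen m k) ℝ)).det) :
    ∀ (a b : Fin n) (H : Fin m → ℕ), (∑ i, H i = 2 * k) →
      ∑ p ∈ Finset.univ.filter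
          (fun p : MultiIndexLen m k × MultiIndexLen m k => p.1.1 + p.2.1 = H),
        MvPolynomial.pderiv (a, p.1) (MvPolynomial.pderiv (b, p.2) L) = 0 := by
  intro a b H hH
  classical
  subst hL
  -- the entry map and the pairing condition
  set e : Fin h → Fin h → Fin n × MultiIndexLen m k := fun r c =>
    (α r, ⟨I r + 𝒥 c, by
      simp only [Pi.add_apply, Finset.sum_add_distrib, hIlen r, h𝒥len c]
      omega⟩) with he
  set D : (Fin n × MultiIndexLen m k) → (Fin n × MultiIndexLen m k) → Prop := fun u v =>
    u.1 = b ∧ v.1 = a ∧ v.2.1 + u.2.1 = H with hDdef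
  have hsym : ∀ r r' c c', D (e r c) (e r' c') ↔ D (e r c') (e r' c) := by
    intro r r' c c'
    simp only [hDdef, he]
    constructor
    · rintro ⟨h1, h2, h3⟩
      exact ⟨h1, h2, by rw [← h3]; abel⟩
    · rintro ⟨h1, h2, h3⟩
      exact ⟨h1, h2, by rw [← h3]; abel⟩
  -- collapse the sum over pairs (J, K) with J + K = H
  have collapse : ∀ (u v : Fin n × MultiIndexLen m k) (Q : MvPolynomial (Fin n × MultiIndexLen m k) ℝ),
      (∑ p ∈ Finset.univ.filter
          (fun p : MultiIndexLen m k × MultiIndexLen m k => p.1.1 + p.2.1 = H),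
        if u = (b, p.2) ∧ v = (a, p.1) then Q else 0) = if D u v then Q else 0 := by
    intro u v Q
    have hiff : ∀ p : MultiIndexLen m k × MultiIndexLen m k,
        (u = (b, p.2) ∧ v = (a, p.1)) ↔ ((u.1 = b ∧ v.1 = a) ∧ p = (v.2, u.2)) := by
      intro p
      constructor
      · rintro ⟨hu, hv⟩
        subst hu; subst hv
        exact ⟨⟨rfl, rfl⟩, rfl⟩
      · rintro ⟨⟨hu1, hv1⟩, rfl⟩
        exact ⟨by rw [← hu1], by rw [← hv1]⟩
    simp only [hiff]
    by_cases hA : u.1 = b ∧ v.1 = a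
    · simp only [hA, true_and]
      rw [Finset.sum_ite_eq' _ (v.2, u.2) (fun _ => Q)]
      by_cases hd : v.2.1 + u.2.1 = H
      · have hmem : (v.2, u.2) ∈ Finset.univ.filter
            (fun p : MultiIndexLen m k × MultiIndexLen m k => p.1.1 + p.2.1 = H) :=
          Finset.mem_filter.mpr ⟨Finset.mem_univ _, hd⟩
        rw [if_pos hmem, if_pos (show D u v from ⟨hA.1, hA.2, hd⟩)]
      · have hmem : (v.2, u.2) ∉ Finset.univ.filter
            (fun p : MultiIndexLen m k × MultiIndexLen m k => p.1.1 + p.2.1 = H) :=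
          fun hc => hd (Finset.mem_filter.mp hc).2
        rw [if_neg hmem, if_neg (show ¬ D u v from fun hc => hd hc.2.2)]
    · have hno : ∀ p : MultiIndexLen m k × MultiIndexLen m k,
          ¬((u.1 = b ∧ v.1 = a) ∧ p = (v.2, u.2)) := fun p hc => hA hc.1
      have hD' : ¬ D u v := fun hc => hA ⟨hc.1, hc.2.1⟩
      simp only [hno, if_false, Finset.sum_const_zero, if_neg hD']
  -- expand the determinant and its derivatives
  rw [Matrix.det_apply]
  simp only [Matrix.of_apply, map_sum, Units.smul_def, map_zsmul]
  rw [Finset.sum_comm]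
  refine Eq.trans (Finset.sum_congr rfl fun σ _ => ?_) (det_pair_cancel e D hsym)
  rw [← Finset.smul_sum]
  congr 1
  have expand : ∀ p : MultiIndexLen m k × MultiIndexLen m k,
      pderiv (a, p.1) (pderiv (b, p.2)
        (∏ i : Fin h, (X (e (σ i) i) : MvPolynomial (Fin n × MultiIndexLen m k) ℝ)))
      = ∑ c : Fin h, ∑ c' ∈ Finset.univ.erase c,
          if e (σ c) c = (b, p.2) ∧ e (σ c') c' = (a, p.1) then
            ∏ t ∈ (Finset.univ.erase c).erase c', (X (e (σ t) t) : MvPolynomial (Fin n × MultiIndexLen m k) ℝ)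
          else 0 := fun p =>
    pderiv_pderiv_prod_X Finset.univ (fun i => e (σ i) i) (a, p.1) (b, p.2)
  calc (∑ p ∈ Finset.univ.filter
          (fun p : MultiIndexLen m k × MultiIndexLen m k => p.1.1 + p.2.1 = H),
        pderiv (a, p.1) (pderiv (b, p.2)
          (∏ i : Fin h, (X (e (σ i) i) : MvPolynomial (Fin n × MultiIndexLen m k) ℝ))))
      = ∑ c : Fin h, ∑ c' ∈ Finset.univ.erase c,
          ∑ p ∈ Finset.univ.filter
            (fun p : MultiIndexLen m k × MultiIndexLen m k => p.1.1 + p.2.1 = H),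
            (if e (σ c) c = (b, p.2) ∧ e (σ c') c' = (a, p.1) then
              ∏ t ∈ (Finset.univ.erase c).erase c', (X (e (σ t) t) : MvPolynomial (Fin n × MultiIndexLen m k) ℝ)
            else 0) := by
        simp only [expand]
        rw [Finset.sum_comm]
        exact Finset.sum_congr rfl fun c _ => Finset.sum_comm
    _ = ∑ c : Fin h, ∑ c' ∈ Finset.univ.erase c,
          (if D (e (σ c) c) (e (σ c') c') then
            ∏ t ∈ (Finset.univ.erase c).erase c', (X (e (σ t) t) : MvPolynomial (Fin n × MultiIndexLen m k) ℝ)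
          else 0) := by
        refine Finset.sum_congr rfl fun c _ => Finset.sum_congr rfl fun c' _ => ?_
        exact collapse (e (σ c) c) (e (σ c') c') _
end

section
/- Let m ≥ 1, k ≥ 1, let M denote the finite type of multi-indices of length k in Fin m → ℕ, let p = card M, and let n ≥ p. Fix an enumeration 𝒥₁, …, 𝒥_p of all elements of M. Then the polynomial L ∈ MvPolynomial (Fin n × M) ℝ given by the determinant of the p × p matrix whose (r, c) entry is the variable X_{(r, 𝒥_c)} (rows indexed by the first p elements of Fin n) has total degree exactly p, and for every α, β ∈ Fin n and every multi-index H with |H| = 2k, the sum over all pairs (J, K) ∈ M × M with J + K = H of pderiv (α,J) (pderiv (β,K) L) equals 0. -/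
open MvPolynomial Finsupp

lemma aux_prod_X {σG γ : Type*} [DecidableEq σG] (s : Finset γ) (g : γ → σG) :
    (∏ c ∈ s, (MvPolynomial.X (g c) : MvPolynomial σG ℝ)) =
      MvPolynomial.monomial (∑ c ∈ s, Finsupp.single (g c) 1) 1 := by
  classical
  induction s using Finset.induction with
  | empty => simp
  | @insert a s ha ih =>
      rw [Finset.prod_insert ha, Finset.sum_insert ha, ih,
        show (MvPolynomial.X (g a) : MvPolynomial σG ℝ)
            = MvPolynomial.monomial (Finsupp.single (g a) 1) 1 from rfl,
        MvPolynomial.monomial_mul, one_mul]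

lemma aux_D_apply {n p : ℕ} (hn : p ≤ n) {M : Type*} (𝒥 : Fin p ≃ M)
    (σ : Equiv.Perm (Fin p)) (x : Fin n) (Jx : M) :
    (∑ c : Fin p, Finsupp.single ((Fin.castLE hn (σ c), 𝒥 c) : Fin n × M) 1
        : (Fin n × M) →₀ ℕ) (x, Jx)
      = if Fin.castLE hn (σ (𝒥.symm Jx)) = x then 1 else 0 := by
  classical
  rw [Finsupp.finset_sum_apply, Finset.sum_eq_single (𝒥.symm Jx)]
  · simp [Finsupp.single_apply, Prod.ext_iff, eq_comm]
  · intro c _ hc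
    rw [Finsupp.single_apply, if_neg]
    intro h
    have h2 : 𝒥 c = Jx := congrArg Prod.snd h
    exact hc (by rw [← h2]; simp)
  · simp

lemma aux_D_sum {n p : ℕ} (hn : p ≤ n) {M : Type*} (𝒥 : Fin p ≃ M)
    (σ : Equiv.Perm (Fin p)) :
    (∑ c : Fin p, Finsupp.single ((Fin.castLE hn (σ c), 𝒥 c) : Fin n × M) 1
        : (Fin n × M) →₀ ℕ).sum (fun _ e => e) = p := by
  classical
  rw [← Finsupp.sum_finset_sum_index (by simp) (by intros; rfl)]
  simp


/-- Corollary to Theorem 5.1: with `p = card (MultiIndexLen m k)` and `n ≥ p`, the `p × p`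
determinant `L = det (X_{(r, 𝒥_c)})` (rows indexed by the first `p` elements of `Fin n`,
columns by an enumeration `𝒥` of all multi-indices of length `k`) has total degree exactly
`p` and satisfies the projectability condition (6), showing that the degree bound `p_k`
of Theorem 3.2 is sharp. -/
theorem degree_bound_sharp (m k : ℕ) (hm : 1 ≤ m) (hk : 1 ≤ k)
    (p : ℕ) (hp : p = Fintype.card (MultiIndexLen m k))
    (n : ℕ) (hn : p ≤ n)
    (𝒥 : Fin p ≃ MultiIndexLen m k)
    (L : MvPolynomial (Fin n × MultiIndexLen m k) ℝ)
    (hL : L = (Matrix.of fun r c : Fin p =>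
        (MvPolynomial.X (Fin.castLE hn r, 𝒥 c) :
          MvPolynomial (Fin n × MultiIndexLen m k) ℝ)).det) :
    L.totalDegree = p ∧
      ∀ (α β : Fin n) (H : Fin m → ℕ), (∑ i, H i = 2 * k) →
        ∑ pr ∈ Finset.univ.filter
            (fun pr : MultiIndexLen m k × MultiIndexLen m k => pr.1.1 + pr.2.1 = H),
          MvPolynomial.pderiv (α, pr.1) (MvPolynomial.pderiv (β, pr.2) L) = 0 := by
  classical
  set D : Equiv.Perm (Fin p) → ((Fin n × (MultiIndexLen m k)) →₀ ℕ) :=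
    fun σ => ∑ c : Fin p, Finsupp.single (Fin.castLE hn (σ c), 𝒥 c) 1 with hD
  set ε : Equiv.Perm (Fin p) → ℝ := fun σ => ((Equiv.Perm.sign σ : ℤ) : ℝ) with hε
  have hεne : ∀ σ, ε σ ≠ 0 := by
    intro σ
    simp only [hε]
    exact_mod_cast Int.cast_ne_zero.mpr (Units.ne_zero _)
  have hDap : ∀ σ (x : Fin n) (Jx : (MultiIndexLen m k)),
      D σ (x, Jx) = if Fin.castLE hn (σ (𝒥.symm Jx)) = x then 1 else 0 :=
    fun σ x Jx => aux_D_apply hn 𝒥 σ x Jx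
  have hDsum : ∀ σ, (D σ).sum (fun _ e => e) = p := fun σ => aux_D_sum hn 𝒥 σ
  have key : L = ∑ σ : Equiv.Perm (Fin p), MvPolynomial.monomial (D σ) (ε σ) := by
    rw [hL, Matrix.det_apply']
    refine Finset.sum_congr rfl fun σ _ => ?_
    have h1 : ∀ i : Fin p, (Matrix.of fun r c : Fin p =>
        (MvPolynomial.X (Fin.castLE hn r, 𝒥 c) :
          MvPolynomial (Fin n × (MultiIndexLen m k)) ℝ)) (σ i) i = MvPolynomial.X (Fin.castLE hn (σ i), 𝒥 i) :=
      fun i => rfl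
    rw [Finset.prod_congr rfl (fun i _ => h1 i), aux_prod_X,
      show ((((Equiv.Perm.sign σ : ℤ)) : MvPolynomial (Fin n × (MultiIndexLen m k)) ℝ))
          = MvPolynomial.C (ε σ) from (map_intCast (MvPolynomial.C : ℝ →+* MvPolynomial (Fin n × (MultiIndexLen m k)) ℝ) _).symm,
      MvPolynomial.C_mul_monomial, mul_one]
  constructor
  · -- total degree = p
    refine le_antisymm ?_ ?_
    · rw [key]
      refine le_trans (MvPolynomial.totalDegree_finset_sum _ _) ?_
      refine Finset.sup_le fun σ _ => ?_
      rw [MvPolynomial.totalDegree_monomial _ (hεne σ), hDsum σ]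
    · have hc1 : MvPolynomial.coeff (D 1) L = 1 := by
        rw [key, MvPolynomial.coeff_sum]
        rw [Finset.sum_eq_single (1 : Equiv.Perm (Fin p))]
        · rw [MvPolynomial.coeff_monomial, if_pos rfl]; simp [hε]
        · intro σ _ hσ
          rw [MvPolynomial.coeff_monomial, if_neg]
          intro hDeq
          apply hσ
          apply Equiv.ext
          intro c
          have h := congrArg (fun F : (Fin n × (MultiIndexLen m k)) →₀ ℕ =>
            F (Fin.castLE hn c, 𝒥 c)) hDeq
          simp only [hDap, Equiv.symm_apply_apply, Equiv.Perm.one_apply] at h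
          rw [Equiv.Perm.one_apply]
          by_cases h' : Fin.castLE hn (σ c) = Fin.castLE hn c
          · exact Fin.castLE_injective hn h'
          · simp [h'] at h
        · simp
      have hsup : D 1 ∈ L.support := MvPolynomial.mem_support_iff.mpr (by rw [hc1]; norm_num)
      have h2 := MvPolynomial.le_totalDegree hsup
      rwa [hDsum 1] at h2
  · intro α β H hH
    have hterm : ∀ (σ : Equiv.Perm (Fin p)) (J K : MultiIndexLen m k),
        MvPolynomial.pderiv (α, J) (MvPolynomial.pderiv (β, K)
            (MvPolynomial.monomial (D σ) (ε σ)))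
          = MvPolynomial.monomial
              (D σ - Finsupp.single (β, K) 1 - Finsupp.single (α, J) 1)
              (ε σ * (D σ (β, K)) *
                (((D σ - Finsupp.single (β, K) 1 :
                    (Fin n × MultiIndexLen m k) →₀ ℕ) (α, J) : ℕ) : ℝ)) := by
      intro σ J K
      rw [MvPolynomial.pderiv_monomial, MvPolynomial.pderiv_monomial]
    have hzero : ∀ (σ : Equiv.Perm (Fin p)) (J : MultiIndexLen m k),
        MvPolynomial.pderiv (α, J) (MvPolynomial.pderiv (β, J)
          (MvPolynomial.monomial (D σ) (ε σ))) = 0 := by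
      intro σ J
      rw [hterm]
      suffices hcz : ε σ * (D σ (β, J)) *
          (((D σ - Finsupp.single (β, J) 1 :
              (Fin n × MultiIndexLen m k) →₀ ℕ) (α, J) : ℕ) : ℝ) = 0 by
        rw [hcz]; exact map_zero _
      rw [Finsupp.tsub_apply, Finsupp.single_apply, hDap, hDap]
      by_cases hb : Fin.castLE hn (σ (𝒥.symm J)) = β
      · by_cases ha : Fin.castLE hn (σ (𝒥.symm J)) = α
        · have hba : β = α := hb.symm.trans ha
          simp [hb, ha, hba]
        · have hba : ¬ (β = α) := fun h => ha (h ▸ hb)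
          simp [hb, ha, hba]
      · simp [hb]
    have hpair : ∀ (σ : Equiv.Perm (Fin p)) (J K : MultiIndexLen m k), J ≠ K →
        MvPolynomial.pderiv (α, J) (MvPolynomial.pderiv (β, K)
          (MvPolynomial.monomial (D σ) (ε σ)))
        + MvPolynomial.pderiv (α, K) (MvPolynomial.pderiv (β, J)
            (MvPolynomial.monomial (D (σ * Equiv.swap (𝒥.symm J) (𝒥.symm K)))
              (ε (σ * Equiv.swap (𝒥.symm J) (𝒥.symm K))))) = 0 := by
      intro σ J K hJK
      have hKJ2 : ¬ (K = J) := fun h => hJK h.symm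
      have hcc : 𝒥.symm J ≠ 𝒥.symm K := fun h => hJK (𝒥.symm.injective h)
      have hε' : ε (σ * Equiv.swap (𝒥.symm J) (𝒥.symm K)) = -ε σ := by
        simp [hε, map_mul, Equiv.Perm.sign_swap hcc]
      have hs1 : (σ * Equiv.swap (𝒥.symm J) (𝒥.symm K)) (𝒥.symm J) = σ (𝒥.symm K) := by
        simp [Equiv.Perm.mul_apply]
      have hs2 : (σ * Equiv.swap (𝒥.symm J) (𝒥.symm K)) (𝒥.symm K) = σ (𝒥.symm J) := by
        simp [Equiv.Perm.mul_apply]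
      have hKJ : (((β, K)) : Fin n × MultiIndexLen m k) ≠ (α, J) :=
        fun h => hJK (congrArg Prod.snd h).symm
      have hJK' : (((β, J)) : Fin n × MultiIndexLen m k) ≠ (α, K) :=
        fun h => hJK (congrArg Prod.snd h)
      rw [hterm, hterm]
      simp only [Finsupp.tsub_apply, Finsupp.single_apply, if_neg hKJ, if_neg hJK',
        Nat.sub_zero, hDap, hs1, hs2]
      by_cases hb : Fin.castLE hn (σ (𝒥.symm K)) = β
      · by_cases ha : Fin.castLE hn (σ (𝒥.symm J)) = α
        · have hexp : D σ - Finsupp.single ((β, K) : Fin n × MultiIndexLen m k) 1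
                - Finsupp.single ((α, J) : Fin n × MultiIndexLen m k) 1
              = D (σ * Equiv.swap (𝒥.symm J) (𝒥.symm K)) - Finsupp.single (β, J) 1
                - Finsupp.single (α, K) 1 := by
            ext w
            obtain ⟨x, Jx⟩ := w
            simp only [Finsupp.tsub_apply, Finsupp.single_apply, hDap, Prod.mk.injEq]
            by_cases h1 : Jx = J
            · subst h1
              rw [hs1, hb, ha]
              by_cases hax : α = x <;> by_cases hbx : β = x <;>
                simp [hax, hbx, hKJ2]
            · by_cases h2 : Jx = K
              · subst h2
                rw [hs2, hb, ha]
                by_cases hax : α = x <;> by_cases hbx : β = x <;>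
                  simp [hax, hbx, hJK]
              · have hx : (σ * Equiv.swap (𝒥.symm J) (𝒥.symm K)) (𝒥.symm Jx)
                    = σ (𝒥.symm Jx) := by
                  rw [Equiv.Perm.mul_apply, Equiv.swap_apply_of_ne_of_ne
                    (fun h => h1 (𝒥.symm.injective h)) (fun h => h2 (𝒥.symm.injective h))]
                rw [hx]
                have hJx1 : ¬ (J = Jx) := fun h => h1 h.symm
                have hJx2 : ¬ (K = Jx) := fun h => h2 h.symm
                simp [hJx1, hJx2]
          rw [hexp, if_pos hb, if_pos ha, hε']
          rw [← map_add]
          norm_num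
        · simp [ha]
      · simp [hb]
    have hLrw : ∀ pr : MultiIndexLen m k × MultiIndexLen m k,
        MvPolynomial.pderiv (α, pr.1) (MvPolynomial.pderiv (β, pr.2) L)
          = ∑ σ : Equiv.Perm (Fin p),
              MvPolynomial.pderiv (α, pr.1) (MvPolynomial.pderiv (β, pr.2)
                (MvPolynomial.monomial (D σ) (ε σ))) := by
      intro pr; rw [key, map_sum, map_sum]
    rw [Finset.sum_congr rfl fun pr _ => hLrw pr, ← Finset.sum_product']
    refine Finset.sum_involution
      (fun a _ => ((a.1.2, a.1.1), a.2 * Equiv.swap (𝒥.symm a.1.1) (𝒥.symm a.1.2)))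
      ?_ ?_ ?_ ?_
    · rintro ⟨⟨J, K⟩, σ⟩ _
      by_cases hJK : J = K
      · subst hJK
        have hswap : Equiv.swap (𝒥.symm J) (𝒥.symm J) = 1 := Equiv.swap_self _
        simp only [hswap, mul_one, hzero, add_zero]
      · exact hpair σ J K hJK
    · rintro ⟨⟨J, K⟩, σ⟩ _ hf hEq
      have hKJ : K = J := congrArg (fun x => x.1.1) hEq
      subst hKJ
      exact hf (hzero σ _)
    · rintro ⟨⟨J, K⟩, σ⟩ ha
      simp only [Finset.mem_product, Finset.mem_filter, Finset.mem_univ, true_and,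
        and_true] at ha ⊢
      rw [add_comm]; exact ha
    · rintro ⟨⟨J, K⟩, σ⟩ _
      have hmm : (σ * Equiv.swap (𝒥.symm J) (𝒥.symm K)) * Equiv.swap (𝒥.symm K) (𝒥.symm J)
          = σ := by
        rw [Equiv.swap_comm (𝒥.symm K) (𝒥.symm J), mul_assoc, Equiv.swap_mul_self, mul_one]
      simp only [hmm]
end

section
/- Let m, n, k ≥ 1 and let M denote the finite type of multi-indices of length k in Fin m → ℕ. Let Q ∈ MvPolynomial (Fin n × M) ℝ be homogeneous of degree 2 and suppose that for every α, β ∈ Fin n and every multi-index H with |H| = 2k, the sum over all pairs (J, K) ∈ M × M with J + K = H of pderiv (α,J) (pderiv (β,K) Q) equals 0. Then Q is a real linear combination of polynomials of the form X_{(α, I₁+𝒥₁)} · X_{(β, I₂+𝒥₂)} − X_{(α, I₁+𝒥₂)} · X_{(β, I₂+𝒥₁)}, where α, β ∈ Fin n, and I₁, I₂, 𝒥₁, 𝒥₂ are multi-indices with |I₁| = |I₂|, |𝒥₁| = |𝒥₂|, and |I₁| + |𝒥₁| = k. -/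
/-!
By Euler's identity applied twice, a quadratic form is `Q = ½ ∑ c_{uv} X_u X_v` with the
constant second derivatives `c_{uv} = ∂_u ∂_v Q`. Group the terms with `u = (α, J)`,
`v = (β, K)` by `(α, β, J + K)`: projectability says the coefficients of each group sum to
zero, so each group is a combination of differences `X_{(α,J)} X_{(β,K)} - X_{(α,J₀)} X_{(β,K₀)}`
with `J + K = J₀ + K₀`. Splitting `J = I₁ + 𝒥₁`, `J₀ = I₁ + 𝒥₂` with `I₁ = J ⊓ J₀` exhibits
each such difference as a hyperaffine determinant.
-/

open MvPolynomial

namespace MvPolynomial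

variable {R σ : Type*} [CommSemiring R] [Fintype σ] {Q : MvPolynomial σ R}

theorem IsHomogeneous.sum_X_mul_X_mul_pderiv_pderiv {n : ℕ} (hQ : Q.IsHomogeneous n) :
    ∑ u, ∑ v, X u * X v * pderiv u (pderiv v Q) = ((n - 1) * n) • Q := by
  calc ∑ u, ∑ v, X u * X v * pderiv u (pderiv v Q)
      = ∑ v, X v * ∑ u, X u * pderiv u (pderiv v Q) := by
        rw [Finset.sum_comm]
        simp only [Finset.mul_sum]
        exact Finset.sum_congr rfl fun _ _ => Finset.sum_congr rfl fun _ _ => by ring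
    _ = ∑ v, X v * ((n - 1) • pderiv v Q) := by
        simp only [hQ.pderiv.sum_X_mul_pderiv]
    _ = ((n - 1) * n) • Q := by
        simp only [mul_smul_comm, ← Finset.smul_sum, hQ.sum_X_mul_pderiv, mul_smul]

theorem IsHomogeneous.two_smul_eq_sum_coeff_pderiv_pderiv_smul (hQ : Q.IsHomogeneous 2) :
    2 • Q = ∑ u, ∑ v, coeff 0 (pderiv u (pderiv v Q)) • (X u * X v) := by
  have hconst (u v : σ) : pderiv u (pderiv v Q) = C (coeff 0 (pderiv u (pderiv v Q))) := by
    have h0 : (pderiv u (pderiv v Q)).IsHomogeneous 0 := hQ.pderiv.pderiv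
    exact totalDegree_eq_zero_iff_eq_C.mp ((totalDegree_zero_iff_isHomogeneous σ).mpr h0)
  rw [← (by norm_num : (2 - 1) * 2 = 2), ← hQ.sum_X_mul_X_mul_pderiv_pderiv]
  refine Finset.sum_congr rfl fun u _ => Finset.sum_congr rfl fun v _ => ?_
  rw [smul_eq_C_mul, ← hconst u v, mul_comm]

end MvPolynomial

namespace Submodule

variable {R M ι κ : Type*} [Ring R] [AddCommGroup M] [Module R M] {N : Submodule R M}
  {s : Finset ι} {c : ι → R} {v : ι → M}

theorem sum_smul_mem_of_sum_eq_zero (hc : ∑ i ∈ s, c i = 0)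
    (hv : ∀ i ∈ s, ∀ j ∈ s, v i - v j ∈ N) : ∑ i ∈ s, c i • v i ∈ N := by
  rcases s.eq_empty_or_nonempty with rfl | ⟨j, hj⟩
  · simp
  have hshift : ∑ i ∈ s, c i • v i = ∑ i ∈ s, c i • (v i - v j) := by
    simp only [smul_sub, Finset.sum_sub_distrib, ← Finset.sum_smul, hc, zero_smul, sub_zero]
  rw [hshift]
  exact N.sum_mem fun i hi => N.smul_mem _ (hv i hi j hj)

theorem sum_smul_mem_of_sum_fiber_eq_zero [DecidableEq κ] (g : ι → κ)
    (hc : ∀ i ∈ s, ∑ j ∈ s with g j = g i, c j = 0)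
    (hv : ∀ i ∈ s, ∀ j ∈ s, g i = g j → v i - v j ∈ N) : ∑ i ∈ s, c i • v i ∈ N := by
  rw [← Finset.sum_fiberwise_of_maps_to (fun i hi => Finset.mem_image_of_mem g hi)]
  refine N.sum_mem fun y hy => ?_
  obtain ⟨i, hi, rfl⟩ := Finset.mem_image.mp hy
  refine sum_smul_mem_of_sum_eq_zero (hc i hi) fun j hj l hl => ?_
  rw [Finset.mem_filter] at hj hl
  exact hv j hj.1 l hl.1 (hj.2.trans hl.2.symm)

end Submodule

theorem exists_add_eq_of_add_eq_add {ι : Type*} {J K J₀ K₀ : ι → ℕ} (h : J + K = J₀ + K₀) :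
    ∃ I₁ I₂ 𝒥₁ 𝒥₂ : ι → ℕ,
      I₁ + 𝒥₁ = J ∧ I₂ + 𝒥₂ = K ∧ I₁ + 𝒥₂ = J₀ ∧ I₂ + 𝒥₁ = K₀ := by
  refine ⟨J ⊓ J₀, K - (J₀ - J ⊓ J₀), J - J ⊓ J₀, J₀ - J ⊓ J₀, ?_, ?_, ?_, ?_⟩ <;>
  · funext i
    have := congrFun h i
    simp only [Pi.add_apply, Pi.sub_apply, Pi.inf_apply] at this ⊢
    omega

def hyperaffineDeterminants (m n k : ℕ) : Set (MvPolynomial (Fin n × MultiIndexLen m k) ℝ) :=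
  { P : MvPolynomial (Fin n × MultiIndexLen m k) ℝ |
      ∃ (α β : Fin n) (I₁ I₂ 𝒥₁ 𝒥₂ : Fin m → ℕ)
        (hI : ∑ i, I₁ i = ∑ i, I₂ i) (h𝒥 : ∑ i, 𝒥₁ i = ∑ i, 𝒥₂ i)
        (hIJ : (∑ i, I₁ i) + ∑ i, 𝒥₁ i = k),
        P = MvPolynomial.X (α, ⟨I₁ + 𝒥₁, by
                simp only [Pi.add_apply, Finset.sum_add_distrib]; linarith⟩) *
              MvPolynomial.X (β, ⟨I₂ + 𝒥₂, by
                simp only [Pi.add_apply, Finset.sum_add_distrib]; linarith⟩) -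
            MvPolynomial.X (α, ⟨I₁ + 𝒥₂, by
                simp only [Pi.add_apply, Finset.sum_add_distrib]; linarith⟩) *
              MvPolynomial.X (β, ⟨I₂ + 𝒥₁, by
                simp only [Pi.add_apply, Finset.sum_add_distrib]; linarith⟩) }

theorem X_mul_X_sub_X_mul_X_mem_hyperaffineDeterminants {m n k : ℕ} (α β : Fin n)
    {J K J₀ K₀ : MultiIndexLen m k} (h : J.1 + K.1 = J₀.1 + K₀.1) :
    X (α, J) * X (β, K) - X (α, J₀) * X (β, K₀) ∈ hyperaffineDeterminants m n k := by
  obtain ⟨I₁, I₂, 𝒥₁, 𝒥₂, hJ, hK, hJ₀, hK₀⟩ := exists_add_eq_of_add_eq_add h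
  obtain ⟨J, hJk⟩ := J
  obtain ⟨K, hKk⟩ := K
  obtain ⟨J₀, hJ₀k⟩ := J₀
  obtain ⟨K₀, hK₀k⟩ := K₀
  subst hJ hK hJ₀ hK₀
  simp only [Pi.add_apply, Finset.sum_add_distrib] at hJk hKk hJ₀k
  exact ⟨α, β, I₁, I₂, 𝒥₁, 𝒥₂, by omega, by omega, hJk, rfl⟩

/-- Proposition 6.1: a quadratic homogeneous polynomial `Q` in the highest-order variables
satisfying the projectability condition (6) is a real linear combination of the 2×2
hyperaffine determinants
`X_{(α, I₁+𝒥₁)} X_{(β, I₂+𝒥₂)} − X_{(α, I₁+𝒥₂)} X_{(β, I₂+𝒥₁)}`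
with `|I₁| = |I₂|`, `|𝒥₁| = |𝒥₂|` and `|I₁| + |𝒥₁| = k`. -/
theorem quadratic_component_hyperaffine (m n k : ℕ)
    (Q : MvPolynomial (Fin n × MultiIndexLen m k) ℝ)
    (hQ : Q.IsHomogeneous 2)
    (hproj : ∀ (α β : Fin n) (H : Fin m → ℕ), (∑ i, H i = 2 * k) →
      ∑ p ∈ Finset.univ.filter
          (fun p : MultiIndexLen m k × MultiIndexLen m k => p.1.1 + p.2.1 = H),
        MvPolynomial.pderiv (α, p.1) (MvPolynomial.pderiv (β, p.2) Q) = 0) :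
    Q ∈ Submodule.span ℝ { P : MvPolynomial (Fin n × MultiIndexLen m k) ℝ |
      ∃ (α β : Fin n) (I₁ I₂ 𝒥₁ 𝒥₂ : Fin m → ℕ)
        (hI : ∑ i, I₁ i = ∑ i, I₂ i) (h𝒥 : ∑ i, 𝒥₁ i = ∑ i, 𝒥₂ i)
        (hIJ : (∑ i, I₁ i) + ∑ i, 𝒥₁ i = k),
        P = MvPolynomial.X (α, ⟨I₁ + 𝒥₁, by
                simp only [Pi.add_apply, Finset.sum_add_distrib]; omega⟩) *
              MvPolynomial.X (β, ⟨I₂ + 𝒥₂, by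
                simp only [Pi.add_apply, Finset.sum_add_distrib]; omega⟩) -
            MvPolynomial.X (α, ⟨I₁ + 𝒥₂, by
                simp only [Pi.add_apply, Finset.sum_add_distrib]; omega⟩) *
              MvPolynomial.X (β, ⟨I₂ + 𝒥₁, by
                simp only [Pi.add_apply, Finset.sum_add_distrib]; omega⟩) } := by
  change Q ∈ Submodule.span ℝ (hyperaffineDeterminants m n k)
  rw [← Submodule.smul_mem_iff _ (two_ne_zero (α := ℝ)), ofNat_smul_eq_nsmul,
    hQ.two_smul_eq_sum_coeff_pderiv_pderiv_smul]
  simp only [Fintype.sum_prod_type]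
  refine Submodule.sum_mem _ fun α _ => ?_
  rw [Finset.sum_comm]
  refine Submodule.sum_mem _ fun β _ => ?_
  simp only [← Fintype.sum_prod_type']
  refine Submodule.sum_smul_mem_of_sum_fiber_eq_zero (fun p => p.1.1 + p.2.1) ?_ ?_
  · intro p _
    have hH : ∑ i, (p.1.1 + p.2.1) i = 2 * k := by
      simp only [Pi.add_apply, Finset.sum_add_distrib, p.1.2, p.2.2]; ring
    rw [← coeff_sum, hproj α β _ hH, coeff_zero]
  · exact fun p _ q _ hpq => Submodule.subset_span
      (X_mul_X_sub_X_mul_X_mem_hyperaffineDeterminants α β hpq)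
end

section
/- Let m ≥ 1 and k ≥ 0, and let H₁, H₂, K₁, K₂ : Fin m → ℕ be multi-indices with |H₁| = |H₂| = |K₁| = |K₂| = k and H₁ + H₂ = K₁ + K₂ pointwise. Define I₁, I₂ : Fin m → ℕ by I₁(i) = min(H₁(i), K₁(i)) and I₂(i) = min(H₂(i), K₂(i)). Then, setting 𝒥₁ = H₁ − I₁ and 𝒥₂ = H₂ − I₂ (pointwise subtraction), one has I₁ + 𝒥₁ = H₁, I₂ + 𝒥₂ = H₂, I₁ + 𝒥₂ = K₁, I₂ + 𝒥₁ = K₂, and |I₁| = |I₂| (equivalently |𝒥₁| = |𝒥₂|). -/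
/-- The combinatorial lemma of Proposition 6.1: if `|H₁| = |H₂| = |K₁| = |K₂| = k` and
`H₁ + H₂ = K₁ + K₂`, then with `I₁ = min(H₁,K₁)`, `I₂ = min(H₂,K₂)` (pointwise) and
`𝒥₁ = H₁ - I₁`, `𝒥₂ = H₂ - I₂`, one has `I₁ + 𝒥₁ = H₁`, `I₂ + 𝒥₂ = H₂`, `I₁ + 𝒥₂ = K₁`,
`I₂ + 𝒥₁ = K₂`, `|I₁| = |I₂|` and `|𝒥₁| = |𝒥₂|`. -/
theorem hyperaffine_binomial_structure (m k : ℕ) (hm : 1 ≤ m)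
    (H₁ H₂ K₁ K₂ : Fin m → ℕ)
    (hH₁ : ∑ i, H₁ i = k) (hH₂ : ∑ i, H₂ i = k)
    (hK₁ : ∑ i, K₁ i = k) (hK₂ : ∑ i, K₂ i = k)
    (hsum : H₁ + H₂ = K₁ + K₂) :
    ∀ I₁ I₂ 𝒥₁ 𝒥₂ : Fin m → ℕ,
      (∀ i, I₁ i = min (H₁ i) (K₁ i)) → (∀ i, I₂ i = min (H₂ i) (K₂ i)) →
      𝒥₁ = H₁ - I₁ → 𝒥₂ = H₂ - I₂ →
      I₁ + 𝒥₁ = H₁ ∧ I₂ + 𝒥₂ = H₂ ∧ I₁ + 𝒥₂ = K₁ ∧ I₂ + 𝒥₁ = K₂ ∧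
        (∑ i, I₁ i = ∑ i, I₂ i) ∧ (∑ i, 𝒥₁ i = ∑ i, 𝒥₂ i) := by
  intro I₁ I₂ 𝒥₁ 𝒥₂ hI₁ hI₂ hJ₁ hJ₂
  subst hJ₁ hJ₂
  have hs : ∀ i, H₁ i + H₂ i = K₁ i + K₂ i := fun i => congrFun hsum i
  have e1 : I₁ + (H₁ - I₁) = H₁ := by
    funext i; simp only [Pi.add_apply, Pi.sub_apply, hI₁ i]; omega
  have e2 : I₂ + (H₂ - I₂) = H₂ := by
    funext i; simp only [Pi.add_apply, Pi.sub_apply, hI₂ i]; omega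
  have e3 : I₁ + (H₂ - I₂) = K₁ := by
    funext i; simp only [Pi.add_apply, Pi.sub_apply, hI₁ i, hI₂ i]
    have := hs i; omega
  have e4 : I₂ + (H₁ - I₁) = K₂ := by
    funext i; simp only [Pi.add_apply, Pi.sub_apply, hI₁ i, hI₂ i]
    have := hs i; omega
  refine ⟨e1, e2, e3, e4, ?_, ?_⟩
  · have s3 : ∑ i, I₁ i + ∑ i, (H₂ - I₂) i = k := by
      rw [← Finset.sum_add_distrib]
      simpa [hK₁] using congrArg (fun f => ∑ i, f i) e3
    have s2 : ∑ i, I₂ i + ∑ i, (H₂ - I₂) i = k := by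
      rw [← Finset.sum_add_distrib]
      simpa [hH₂] using congrArg (fun f => ∑ i, f i) e2
    omega
  · have s1 : ∑ i, I₂ i + ∑ i, (H₁ - I₁) i = k := by
      rw [← Finset.sum_add_distrib]
      simpa [hK₂] using congrArg (fun f => ∑ i, f i) e4
    have s2 : ∑ i, I₂ i + ∑ i, (H₂ - I₂) i = k := by
      rw [← Finset.sum_add_distrib]
      simpa [hH₂] using congrArg (fun f => ∑ i, f i) e2
    omega
end

section
/- Let m ≥ 1, k ≥ 1, and let H : Fin m → ℕ be a multi-index with |H| = 2k. Then the set of ordered pairs (J, K) of multi-indices with |J| = |K| = k and J + K = H has exactly one element if and only if H = Pi.single i (2k) for some i : Fin m (i.e., H is pure). -/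
/-- A function supported at `i` with sum `k` is `Pi.single i k`. -/
lemma eq_single_of_support {m k : ℕ} (i : Fin m) (J : Fin m → ℕ)
    (h0 : ∀ j, j ≠ i → J j = 0) (hs : ∑ j, J j = k) : J = Pi.single i k := by
  have hJi : J i = k := by
    rw [← hs, Finset.sum_eq_single i (fun b _ hb => h0 b hb) (by simp)]
  funext l
  by_cases hl : l = i
  · subst hl; simpa using hJi
  · rw [h0 l hl, Pi.single_eq_of_ne hl]

/-- For a multi-index `H` of length `2k`, there is exactly one ordered pair `(J, K)` of
multi-indices of length `k` with `J + K = H` if and only if `H` is pure, i.e.,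
`H = Pi.single i (2k)` for some `i`. -/
theorem unique_splitting_iff_pure (m k : ℕ) (hm : 1 ≤ m) (hk : 1 ≤ k)
    (H : Fin m → ℕ) (hH : ∑ i, H i = 2 * k) :
    (∃! p : (Fin m → ℕ) × (Fin m → ℕ),
        (∑ i, p.1 i = k) ∧ (∑ i, p.2 i = k) ∧ p.1 + p.2 = H) ↔
      ∃ i : Fin m, H = Pi.single i (2 * k) := by
  constructor
  · rintro ⟨⟨J, K⟩, ⟨hJ, hK, hJK⟩, huniq⟩
    dsimp only at hJ hK hJK
    -- the swapped pair also works, so K = J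
    have hswap := huniq (K, J) ⟨hK, hJ, by rw [← hJK]; ring⟩
    have hKJ : K = J := congrArg Prod.fst hswap
    rw [hKJ] at hJK
    -- J is supported at a single index
    obtain ⟨i, -, hi⟩ : ∃ i ∈ Finset.univ, J i ≠ 0 := by
      by_contra h
      push_neg at h
      have : ∑ j, J j = 0 := Finset.sum_eq_zero fun j _ => h j (Finset.mem_univ j)
      omega
    have h0 : ∀ j, j ≠ i → J j = 0 := by
      intro j hji
      by_contra hj
      -- construct a different splitting by transferring one unit
      set J' : Fin m → ℕ := fun l => J l + (Pi.single j 1 : Fin m → ℕ) l - (Pi.single i 1 : Fin m → ℕ) l with hJ'def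
      set K' : Fin m → ℕ := fun l => J l + (Pi.single i 1 : Fin m → ℕ) l - (Pi.single j 1 : Fin m → ℕ) l with hK'def
      have hiJ : 1 ≤ J i := Nat.one_le_iff_ne_zero.mpr hi
      have hjJ : 1 ≤ J j := Nat.one_le_iff_ne_zero.mpr hj
      have hJ'1 : J' + Pi.single i 1 = J + Pi.single j 1 := by
        funext l
        simp only [Pi.add_apply, hJ'def]
        by_cases hl : l = i
        · subst hl
          rw [Pi.single_eq_same, Pi.single_eq_of_ne (Ne.symm hji)]
          omega
        · rw [Pi.single_eq_of_ne hl]; omega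
      have hK'1 : K' + Pi.single j 1 = J + Pi.single i 1 := by
        funext l
        simp only [Pi.add_apply, hK'def]
        by_cases hl : l = j
        · subst hl
          rw [Pi.single_eq_same, Pi.single_eq_of_ne hji]
          omega
        · rw [Pi.single_eq_of_ne hl]; omega
      have hsingle : ∀ (a : Fin m), ∑ l, Pi.single a 1 l = 1 := by
        intro a; simp [Finset.sum_pi_single]
      have hsJ' : ∑ l, J' l = k := by
        have := congrArg (fun f => ∑ l, f l) hJ'1
        simp only [Pi.add_apply, Finset.sum_add_distrib, hsingle] at this
        omega
      have hsK' : ∑ l, K' l = k := by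
        have := congrArg (fun f => ∑ l, f l) hK'1
        simp only [Pi.add_apply, Finset.sum_add_distrib, hsingle] at this
        omega
      have hadd : J' + K' = H := by
        rw [← hJK]
        funext l
        simp only [Pi.add_apply, hJ'def, hK'def]
        by_cases hl : l = i
        · subst hl
          rw [Pi.single_eq_same, Pi.single_eq_of_ne (Ne.symm hji)]
          omega
        · by_cases hl' : l = j
          · subst hl'
            rw [Pi.single_eq_same, Pi.single_eq_of_ne hji]
            omega
          · rw [Pi.single_eq_of_ne hl, Pi.single_eq_of_ne hl']
            omega
      have heq := huniq (J', K') ⟨hsJ', hsK', hadd⟩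
      have : J' j = J j := by
        have := congrArg Prod.fst heq
        simp only at this
        rw [this]
      rw [hJ'def] at this
      simp only [Pi.single_eq_same, Pi.single_eq_of_ne hji] at this
      omega
    have hJeq : J = Pi.single i k := eq_single_of_support i J h0 hJ
    refine ⟨i, ?_⟩
    rw [← hJK, hJeq, ← Pi.single_add]
    congr 1
    ring
  · rintro ⟨i, rfl⟩
    refine ⟨(Pi.single i k, Pi.single i k), ⟨by simp [Finset.sum_pi_single],
      by simp [Finset.sum_pi_single], by rw [← Pi.single_add]; congr 1; ring⟩, ?_⟩
    rintro ⟨J, K⟩ ⟨hJ, hK, hJK⟩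
    have h0 : ∀ j, j ≠ i → J j = 0 ∧ K j = 0 := by
      intro j hji
      have := congrFun hJK j
      simp only [Pi.add_apply, Pi.single_eq_of_ne hji] at this
      omega
    have hJe : J = Pi.single i k := eq_single_of_support i J (fun j h => (h0 j h).1) hJ
    have hKe : K = Pi.single i k := eq_single_of_support i K (fun j h => (h0 j h).2) hK
    simp [hJe, hKe]
end

section
/- There is no twice continuously differentiable function f : ℝ × ℝ × ℝ → ℝ such that for all smooth functions u, v : ℝ → ℝ and all t ∈ ℝ, u(t) · v'(t) − v(t) · u'(t) = (d/dt) [f(t, u(t), v(t))]. -/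
/-- If a differentiable function has constant derivative `c`, it is affine. -/
lemma affine_of_deriv_const (φ : ℝ → ℝ) (hφ : Differentiable ℝ φ) (c : ℝ)
    (h : ∀ t, deriv φ t = c) : ∀ t, φ t = φ 0 + c * t := by
  have hψ : Differentiable ℝ fun t => φ t - c * t := by
    exact hφ.sub ((differentiable_id.const_mul c))
  have hd : ∀ t, deriv (fun t => φ t - c * t) t = 0 := by
    intro t
    have hx : HasDerivAt (fun t => φ t - c * t) (c - c * 1) t :=
      ((hφ t).hasDerivAt.sub (((hasDerivAt_id t).const_mul c))).congr_deriv (by rw [h t])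
    simpa using hx.deriv
  have := is_const_of_deriv_eq_zero hψ hd
  intro t
  have h0 := this t 0
  simp at h0
  linarith

/-- The first-order Lagrangian `L₁ = u v' − v u'` is not a total derivative: there is no
`C²` function `f : ℝ × ℝ × ℝ → ℝ` with `u v' − v u' = (d/dt)[f(t, u(t), v(t))]` for all
smooth `u`, `v`. -/
theorem lagrangian_not_total_derivative :
    ¬ ∃ f : ℝ × ℝ × ℝ → ℝ, ContDiff ℝ 2 f ∧
      ∀ u v : ℝ → ℝ, ContDiff ℝ (⊤ : ℕ∞) u → ContDiff ℝ (⊤ : ℕ∞) v →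
        ∀ t : ℝ, u t * deriv v t - v t * deriv u t =
          deriv (fun s => f (s, u s, v s)) t := by
  rintro ⟨f, hf, hL⟩
  have hfd : Differentiable ℝ f := hf.differentiable (by norm_num)
  have hdiff : ∀ u v : ℝ → ℝ, ContDiff ℝ (⊤ : ℕ∞) u → ContDiff ℝ (⊤ : ℕ∞) v →
      Differentiable ℝ (fun s => f (s, u s, v s)) := by
    intro u v hu hv
    exact hfd.comp (differentiable_id.prodMk
      ((hu.differentiable (by simp)).prodMk (hv.differentiable (by simp))))
  -- constants: f(t,a,b) = f(0,a,b)
  have hconst : ∀ a b t : ℝ, f (t, a, b) = f (0, a, b) := by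
    intro a b t
    have h := hL (fun _ => a) (fun _ => b) contDiff_const contDiff_const
    have hd : ∀ s : ℝ, deriv (fun s => f (s, a, b)) s = 0 := by
      intro s
      have := h s
      simpa using this.symm
    have := affine_of_deriv_const _ (hdiff _ _ contDiff_const contDiff_const) 0 hd t
    simpa using this
  -- u = a, v = id : f(t,a,t) = f(0,a,0) + a*t
  have hA : ∀ a t : ℝ, f (t, a, t) = f (0, a, 0) + a * t := by
    intro a t
    have h := hL (fun _ => a) id contDiff_const contDiff_id
    have hd : ∀ s : ℝ, deriv (fun s => f (s, a, s)) s = a := by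
      intro s
      have := h s
      simpa using this.symm
    have := affine_of_deriv_const _ (hdiff _ _ contDiff_const contDiff_id) a hd t
    simpa using this
  -- u = id, v = b : f(t,t,b) = f(0,0,b) - b*t
  have hB : ∀ b t : ℝ, f (t, t, b) = f (0, 0, b) + (-b) * t := by
    intro b t
    have h := hL id (fun _ => b) contDiff_id contDiff_const
    have hd : ∀ s : ℝ, deriv (fun s => f (s, s, b)) s = -b := by
      intro s
      have := h s
      simpa using this.symm
    have := affine_of_deriv_const _ (hdiff _ _ contDiff_id contDiff_const) (-b) hd t
    simpa using this
  -- combine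
  have e1 : f (0, 1, 1) = f (0, 0, 0) + 1 := by
    have h1 := hA 1 1          -- f(1,1,1) = f(0,1,0) + 1
    have h2 := hconst 1 1 1    -- f(1,1,1) = f(0,1,1)
    have h3 := hB 0 1          -- f(1,1,0) = f(0,0,0)
    have h4 := hconst 1 0 1    -- f(1,1,0) = f(0,1,0)
    -- need f(0,1,0) = f(0,0,0): from hB with b=0, t=1 gives f(1,1,0)=f(0,0,0), and hconst gives f(1,1,0)=f(0,1,0)
    have : f (0, 1, 0) = f (0, 0, 0) := by rw [← h4, h3]; ring
    rw [← h2, h1, this]; ring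
  have e2 : f (0, 1, 1) = f (0, 0, 0) - 1 := by
    have h1 := hB 1 1          -- f(1,1,1) = f(0,0,1) - 1
    have h2 := hconst 1 1 1    -- f(1,1,1) = f(0,1,1)
    have h3 := hA 0 1          -- f(1,0,1) = f(0,0,0)
    have h4 := hconst 0 1 1    -- f(1,0,1) = f(0,0,1)
    have : f (0, 0, 1) = f (0, 0, 0) := by rw [← h4, h3]; ring
    rw [← h2, h1, this]; ring
  linarith [e1, e2]
end
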